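/- Let f₁,…,f_d be invertible elements of Cl(p,q) each squaring to a negative real scalar, and A ∈ Cl(p,q). Then the ordered product of exponentials satisfies (∏_{k=1}^d exp(-f_k)) · A = Σ_{j∈{0,1}^d} A_{c^j(f_d,…,f₁)} · ∏_{k=1}^d exp(-(−1)^{j_k} f_k), where A_{c^j(f_d,…,f₁)} applies the commuting/anticommuting projections starting with f_d. -/

import Mathlib

/-- Commuting/anticommuting projections with respect to an element `B` with inverse `Binv`:
`c⁰(A) = ½(A + B⁻¹AB)`, `c¹(A) = ½(A − B⁻¹AB)`. -/
noncomputable def cProjInv {𝒢 : Type*} [Ring 𝒢] [Algebra ℝ 𝒢]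
    (b : Bool) (Binv B A : 𝒢) : 𝒢 :=
  if b then (2⁻¹ : ℝ) • (A - Binv * A * B) else (2⁻¹ : ℝ) • (A + Binv * A * B)

/-!
If `B` is invertible and `B²` commutes with `A`, then `c⁰_B(A)` commutes with `B` and
`c¹_B(A)` anticommutes with it, so `exp(-B) A = c⁰_B(A) exp(-B) + c¹_B(A) exp(B)`.
Peeling off the leftmost factor `exp(-f₁)` and applying this to every term of the expansion of
`(∏_{k ≥ 2} exp(-f_k)) A` given by induction yields the sum over `j ∈ {0,1}^d`.
-/

open NormedSpace

section Monoid

variable {M : Type*} [Monoid M] {Binv B A : M}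

theorem mul_left_cancel_conj (hr : B * Binv = 1) : B * (Binv * A * B) = A * B := by
  rw [← mul_assoc, ← mul_assoc, hr, one_mul]

theorem conj_mul_self_of_commute (hl : Binv * B = 1) (hA : Commute A (B * B)) :
    Binv * A * B * B = B * A := by
  rw [mul_assoc, mul_assoc, hA.eq, ← mul_assoc, ← mul_assoc, hl, one_mul]

end Monoid

section Projections

variable {𝒢 : Type*} [Ring 𝒢] [Algebra ℝ 𝒢]

theorem cProjInv_false_add_cProjInv_true (Binv B A : 𝒢) :
    cProjInv false Binv B A + cProjInv true Binv B A = A := by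
  simp only [cProjInv, Bool.false_eq_true, if_false, if_true, ← smul_add,
    add_add_sub_cancel, ← two_smul ℝ A, smul_smul]
  norm_num

variable {Binv B A : 𝒢}

theorem semiconjBy_cProjInv_false (hl : Binv * B = 1) (hr : B * Binv = 1)
    (hA : Commute A (B * B)) : SemiconjBy (cProjInv false Binv B A) B B := by
  simp only [SemiconjBy, cProjInv, Bool.false_eq_true, if_false, smul_mul_assoc,
    mul_smul_comm, add_mul, mul_add, conj_mul_self_of_commute hl hA, mul_left_cancel_conj hr,
    add_comm]

theorem semiconjBy_cProjInv_true (hl : Binv * B = 1) (hr : B * Binv = 1)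
    (hA : Commute A (B * B)) : SemiconjBy (cProjInv true Binv B A) B (-B) := by
  simp only [SemiconjBy, cProjInv, if_true, smul_mul_assoc, mul_smul_comm, sub_mul, mul_sub,
    neg_mul, conj_mul_self_of_commute hl hA, mul_left_cancel_conj hr, neg_sub_neg]

end Projections

section Exponential

variable {𝒢 : Type*} [NormedRing 𝒢] [NormedAlgebra ℝ 𝒢] [CompleteSpace 𝒢]

theorem SemiconjBy.exp_right_of_real {x a b : 𝒢} (h : SemiconjBy x a b) :
    SemiconjBy x (exp a) (exp b) :=
  letI := NormedAlgebra.restrictScalars ℚ ℝ 𝒢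
  h.exp_right

theorem exp_neg_mul_eq_cProjInv {Binv B : 𝒢} (hl : Binv * B = 1) (hr : B * Binv = 1) {A : 𝒢}
    (hA : Commute A (B * B)) :
    exp (-B) * A = cProjInv false Binv B A * exp (-B) + cProjInv true Binv B A * exp B := by
  rw [(semiconjBy_cProjInv_false hl hr hA).neg_right.exp_right_of_real.eq,
    (semiconjBy_cProjInv_true hl hr hA).exp_right_of_real.eq, ← mul_add,
    cProjInv_false_add_cProjInv_true]

theorem exp_neg_mul_eq_of_mul_self_eq_algebraMap {F : 𝒢} {r : ℝ} (hr : r ≠ 0)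
    (hF : F * F = algebraMap ℝ 𝒢 (-r)) (A : 𝒢) :
    exp (-F) * A = cProjInv false (r⁻¹ • -F) F A * exp (-F)
      + cProjInv true (r⁻¹ • -F) F A * exp F := by
  have hl : r⁻¹ • -F * F = 1 := by
    rw [smul_mul_assoc, neg_mul, hF, ← map_neg, neg_neg, Algebra.smul_def, ← map_mul,
      inv_mul_cancel₀ hr, map_one]
  have hr' : F * (r⁻¹ • -F) = 1 := by
    rw [mul_smul_comm, mul_neg, ← neg_mul, ← smul_mul_assoc]
    exact hl
  exact exp_neg_mul_eq_cProjInv hl hr' (hF ▸ Algebra.commute_algebraMap_right _ A)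

end Exponential

theorem List.foldl_reverse_finRange_succ {α : Type*} {n : ℕ} (g : α → Fin (n + 1) → α) (a : α) :
    (List.finRange (n + 1)).reverse.foldl g a =
      g ((List.finRange n).reverse.foldl (fun acc k => g acc k.succ) a) 0 := by
  rw [List.finRange_succ, List.reverse_cons, List.foldl_append, ← List.map_reverse,
    List.foldl_map, List.foldl_cons, List.foldl_nil]

/-- Lemma on products with exponentials: for `f₁,…,f_d` squaring to negative real scalars
(so `f_k⁻¹ = r_k⁻¹ (-f_k)`),
`(∏ₖ exp(-f_k))·A = Σ_{j∈{0,1}^d} A_{c^j(f_d,…,f₁)} ∏ₖ exp(-(−1)^{j_k} f_k)`,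
where the projections are applied first with respect to `f_d`. -/
theorem prod_exp_mul_eq_sum {𝒢 : Type*} [NormedRing 𝒢] [NormedAlgebra ℝ 𝒢] [CompleteSpace 𝒢]
    {d : ℕ} (f : Fin d → 𝒢) (r : Fin d → ℝ) (hr : ∀ k, 0 < r k)
    (hf : ∀ k, f k * f k = algebraMap ℝ 𝒢 (-(r k)))
    (A : 𝒢) :
    (List.ofFn fun k => NormedSpace.exp (-(f k))).prod * A =
      ∑ j : Fin d → Bool,
        (((List.finRange d).reverse).foldl
            (fun acc k => cProjInv (j k) ((r k)⁻¹ • (-(f k))) (f k) acc) A) *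
          (List.ofFn fun k =>
            NormedSpace.exp (-((if j k then (-1 : ℝ) else 1) • f k))).prod := by
  induction d with
  | zero => simp
  | succ n ih =>
    rw [List.ofFn_succ, List.prod_cons, mul_assoc,
      ih (fun k => f k.succ) (fun k => r k.succ) (fun k => hr _) (fun k => hf _),
      Finset.mul_sum, ← Equiv.sum_comp (Fin.consEquiv fun _ => Bool), Fintype.sum_prod_type,
      Finset.sum_comm]
    refine Finset.sum_congr rfl fun j _ => ?_
    rw [← mul_assoc, exp_neg_mul_eq_of_mul_self_eq_algebraMap (hr 0).ne' (hf 0), add_mul,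
      Fintype.sum_bool, add_comm]
    simp only [Fin.consEquiv_apply, List.foldl_reverse_finRange_succ, Fin.cons_zero,
      Fin.cons_succ, List.ofFn_succ, List.prod_cons, if_true, Bool.false_eq_true, if_false,
      neg_smul, one_smul, neg_neg, mul_assoc]
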